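/- arXiv:1511.06272 — 3 statements merged into one kernel-verified Lean document; each statement's English description precedes it below -/
import Mathlib

section
/- With the data and hypotheses listed in the context (compactness of m∘K : O → Z′, consistency of the forms aₙ, and the weak stability inf–sup condition), the discrete solution operators converge to the exact one in operator norm: ‖ι∘K − j∘Kₙ‖_{O→O} → 0 as n → ∞. -/
open scoped RealInnerProductSpace
open Filter

set_option maxHeartbeats 1000000 in
/-- Convergence in operator norm of the discrete solution operators for a nonconforming
discretization of an invertible symmetric operator, under compactness of `m ∘ K`,
consistency of the discrete forms, and the weak stability inf–sup condition. -/
theorem discrete_solution_operators_converge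
    {O Y Z Z' : Type*}
    [NormedAddCommGroup O] [InnerProductSpace ℝ O] [CompleteSpace O]
    [NormedAddCommGroup Y] [NormedSpace ℝ Y] [CompleteSpace Y]
    [NormedAddCommGroup Z] [NormedSpace ℝ Z] [CompleteSpace Z]
    [NormedAddCommGroup Z'] [NormedSpace ℝ Z'] [CompleteSpace Z']
    (j : Z →L[ℝ] O) (e : Z' →L[ℝ] O) (k : Y →L[ℝ] Z) (m : Y →L[ℝ] Z') (ι : Y →L[ℝ] O)
    (hj : Function.Injective j) (he : Function.Injective e) (hed : DenseRange e)
    (hjk : ∀ u : Y, j (k u) = ι u) (hem : ∀ u : Y, e (m u) = ι u)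
    (hιinj : Function.Injective ι) (hιd : DenseRange ι)
    (A : Y →L[ℝ] O) (hA : Function.Bijective A)
    (hAsym : ∀ u v : Y, ⟪A u, ι v⟫ = ⟪A v, ι u⟫)
    (K : O →L[ℝ] Y) (hKA : ∀ y : Y, K (A y) = y) (hAK : ∀ u : O, A (K u) = u)
    (ahat : Z' →L[ℝ] Z →L[ℝ] ℝ)
    (hahat : ∀ (u : Y) (v : Z), ahat (m u) v = ⟪A u, j v⟫)
    (X : ℕ → Submodule ℝ Z) (hXfd : ∀ n, FiniteDimensional ℝ (X n))
    (aN : ∀ n, X n →ₗ[ℝ] X n →ₗ[ℝ] ℝ)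
    (haNsym : ∀ n (u v : X n), aN n u v = aN n v u)
    -- (i) compactness of `m ∘ K : O → Z'`
    (hcomp : IsCompactOperator (fun u : O => m (K u)))
    -- (ii) consistency
    (hconsist : ∃ Yinf : Set Y, Dense ((fun u => m u) '' Yinf) ∧
      ∀ u ∈ Yinf, ∃ useq : (n : ℕ) → X n,
        Tendsto (fun n => ‖j ((useq n : X n) : Z) - ι u‖) atTop (nhds 0) ∧
        Tendsto (fun n => ⨆ v : {v : X n // v ≠ 0},
          |⟪A u, j ((v.1 : X n) : Z)⟫ - aN n (useq n) v.1| / ‖((v.1 : X n) : Z)‖)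
          atTop (nhds 0))
    -- (iii) weak stability
    (hstab : ∃ c : ℝ, 0 < c ∧ ∀ n (u : X n),
      c * ‖j ((u : X n) : Z)‖ ≤
        ⨆ v : {v : X n // v ≠ 0}, |aN n u v.1| / ‖((v.1 : X n) : Z)‖)
    -- (iv) discrete solution operators
    (KN : ∀ n, O →ₗ[ℝ] X n)
    (hKN : ∀ n (u : O) (v : X n), aN n (KN n u) v = ⟪u, j ((v : X n) : Z)⟫) :
    Tendsto (fun n => ⨆ u : {u : O // u ≠ 0},
      ‖ι (K u.1) - j ((KN n u.1 : X n) : Z)‖ / ‖u.1‖) atTop (nhds 0) := by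

  classical
  obtain ⟨c, hc, hstab⟩ := hstab
  obtain ⟨Yinf, hYdense, hYapprox⟩ := hconsist
  set E : ℕ → O → O := fun n u => ι (K u) - j ((KN n u : X n) : Z) with hEdef
  -- positivity of norms of nonzero elements of X n
  have hvpos : ∀ n (v : {v : X n // v ≠ 0}), 0 < ‖((v.1 : X n) : Z)‖ := by
    intro n v
    have hne : ((v.1 : X n) : Z) ≠ 0 := by
      intro h
      exact v.2 (Subtype.ext h)
    simpa [norm_pos_iff] using hne
  -- linearity facts about E n
  have hEadd : ∀ n (a b : O), E n (a - b) = E n a - E n b := by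
    intro n a b
    simp only [hEdef, map_sub, Submodule.coe_sub]
    abel
  have hEsmul : ∀ n (r : ℝ) (a : O), E n (r • a) = r • E n a := by
    intro n r a
    simp only [hEdef, map_smul, Submodule.coe_smul, smul_sub]
  -- (a) uniform bound on the discrete part
  have hjbound : ∀ n (u : O), c * ‖j ((KN n u : X n) : Z)‖ ≤ ‖ahat‖ * ‖m (K u)‖ := by
    intro n u
    refine (hstab n (KN n u)).trans (Real.iSup_le (fun v => ?_) (by positivity))
    rw [div_le_iff₀ (hvpos n v), hKN n u v.1]
    have h1 : ahat (m (K u)) ((v.1 : X n) : Z) = ⟪u, j ((v.1 : X n) : Z)⟫ := by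
      rw [hahat (K u), hAK]
    rw [← h1]
    calc |ahat (m (K u)) ((v.1 : X n) : Z)| = ‖ahat (m (K u)) ((v.1 : X n) : Z)‖ := rfl
      _ ≤ ‖ahat‖ * ‖m (K u)‖ * ‖((v.1 : X n) : Z)‖ := ahat.le_opNorm₂ _ _
  -- uniform bound on the error
  have hEbound : ∀ n (u : O), ‖E n u‖ ≤ (‖e‖ + ‖ahat‖ / c) * ‖m (K u)‖ := by
    intro n u
    have h2 : ‖j ((KN n u : X n) : Z)‖ ≤ (‖ahat‖ / c) * ‖m (K u)‖ := by
      rw [div_mul_eq_mul_div, le_div_iff₀ hc, mul_comm _ c]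
      exact hjbound n u
    have h3 : ‖ι (K u)‖ ≤ ‖e‖ * ‖m (K u)‖ := by
      rw [← hem (K u)]
      exact e.le_opNorm _
    calc ‖E n u‖ ≤ ‖ι (K u)‖ + ‖j ((KN n u : X n) : Z)‖ := norm_sub_le _ _
      _ ≤ ‖e‖ * ‖m (K u)‖ + (‖ahat‖ / c) * ‖m (K u)‖ := add_le_add h3 h2
      _ = (‖e‖ + ‖ahat‖ / c) * ‖m (K u)‖ := by ring
  -- pointwise convergence on A '' Yinf
  have hpt : ∀ w ∈ Yinf, Tendsto (fun n => ‖E n (A w)‖) atTop (nhds 0) := by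
    intro w hw
    obtain ⟨useq, h1, h2⟩ := hYapprox w hw
    have hKAw : K (A w) = w := hKA w
    have hkey : ∀ n, c * ‖j ((KN n (A w) : X n) : Z) - j ((useq n : X n) : Z)‖ ≤
        ⨆ v : {v : X n // v ≠ 0},
          |⟪A w, j ((v.1 : X n) : Z)⟫ - aN n (useq n) v.1| / ‖((v.1 : X n) : Z)‖ := by
      intro n
      have hj' : j (((KN n (A w) - useq n : X n)) : Z) =
          j ((KN n (A w) : X n) : Z) - j ((useq n : X n) : Z) := by
        rw [Submodule.coe_sub, map_sub]
      have := hstab n (KN n (A w) - useq n)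
      rw [hj'] at this
      refine this.trans_eq (iSup_congr fun v => ?_)
      congr 1
      rw [map_sub, LinearMap.sub_apply, hKN n (A w) v.1]
    have hbnd : ∀ n, ‖E n (A w)‖ ≤
        (⨆ v : {v : X n // v ≠ 0},
          |⟪A w, j ((v.1 : X n) : Z)⟫ - aN n (useq n) v.1| / ‖((v.1 : X n) : Z)‖) / c
        + ‖j ((useq n : X n) : Z) - ι w‖ := by
      intro n
      have h4 : ‖j ((KN n (A w) : X n) : Z) - j ((useq n : X n) : Z)‖ ≤
          (⨆ v : {v : X n // v ≠ 0},
            |⟪A w, j ((v.1 : X n) : Z)⟫ - aN n (useq n) v.1| / ‖((v.1 : X n) : Z)‖) / c := by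
        rw [le_div_iff₀ hc, mul_comm]
        exact hkey n
      have h5 : E n (A w) = (ι w - j ((useq n : X n) : Z)) -
          (j ((KN n (A w) : X n) : Z) - j ((useq n : X n) : Z)) := by
        simp only [hEdef, hKAw]; abel
      rw [h5]
      calc ‖(ι w - j ((useq n : X n) : Z)) -
            (j ((KN n (A w) : X n) : Z) - j ((useq n : X n) : Z))‖
          ≤ ‖ι w - j ((useq n : X n) : Z)‖ +
            ‖j ((KN n (A w) : X n) : Z) - j ((useq n : X n) : Z)‖ := norm_sub_le _ _
        _ ≤ (⨆ v : {v : X n // v ≠ 0},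
            |⟪A w, j ((v.1 : X n) : Z)⟫ - aN n (useq n) v.1| / ‖((v.1 : X n) : Z)‖) / c
            + ‖j ((useq n : X n) : Z) - ι w‖ := by
            rw [norm_sub_rev (ι w)]
            rw [add_comm]
            exact add_le_add h4 le_rfl
    have hlim : Tendsto (fun n =>
        (⨆ v : {v : X n // v ≠ 0},
          |⟪A w, j ((v.1 : X n) : Z)⟫ - aN n (useq n) v.1| / ‖((v.1 : X n) : Z)‖) / c
        + ‖j ((useq n : X n) : Z) - ι w‖) atTop (nhds 0) := by
      have := (h2.div_const c).add h1
      simpa using this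
    exact squeeze_zero (fun n => norm_nonneg _) hbnd hlim
  -- nonnegativity of the sup
  have hSnonneg : ∀ n, 0 ≤ ⨆ u : {u : O // u ≠ 0}, ‖E n u.1‖ / ‖u.1‖ := fun n =>
    Real.iSup_nonneg fun u => div_nonneg (norm_nonneg _) (norm_nonneg _)
  -- main estimate
  rw [Metric.tendsto_atTop]
  intro ε hε
  set C : ℝ := ‖e‖ + ‖ahat‖ / c with hCdef
  have hC0 : 0 ≤ C := by positivity
  set δ : ℝ := ε / (8 * (C + 1)) with hδdef
  have hδ : 0 < δ := by positivity
  -- totally bounded image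
  have hF : IsCompactOperator ⇑(m.toLinearMap.comp K.toLinearMap) := hcomp
  obtain ⟨Kset, hKc, hKsub⟩ := hF.image_closedBall_subset_compact 1
  have htb : TotallyBounded ((fun u : O => m (K u)) '' Metric.closedBall 0 1) :=
    TotallyBounded.subset hKsub hKc.totallyBounded
  obtain ⟨t, htfin, hcover⟩ := Metric.totallyBounded_iff.mp htb δ hδ
  -- approximate net points from m '' Yinf
  have hchoice : ∀ y ∈ t, ∃ w ∈ Yinf, dist y (m w) < δ := by
    intro y hy
    rcases Metric.mem_closure_iff.mp (hYdense y) δ hδ with ⟨b, hb, hby⟩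
    rcases hb with ⟨w, hw, rfl⟩
    exact ⟨w, hw, hby⟩
  choose! w hw1 hw2 using hchoice
  -- eventual pointwise bound at the net points
  have hev : ∀ᶠ n in atTop, ∀ y ∈ t, ‖E n (A (w y))‖ < ε / 4 := by
    rw [eventually_all_finite htfin]
    intro y hy
    exact (hpt (w y) (hw1 y hy)).eventually (gt_mem_nhds (by positivity))
  rw [eventually_atTop] at hev
  obtain ⟨N, hN⟩ := hev
  refine ⟨N, fun n hn => ?_⟩
  rw [Real.dist_eq, sub_zero, abs_of_nonneg (hSnonneg n)]
  have hkey : ∀ u : {u : O // u ≠ 0}, ‖E n u.1‖ / ‖u.1‖ ≤ ε / 2 := by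
    intro u
    have hu0 : ‖u.1‖ ≠ 0 := norm_ne_zero_iff.mpr u.2
    have hupos : 0 < ‖u.1‖ := norm_pos_iff.mpr u.2
    set u₀ : O := ‖u.1‖⁻¹ • u.1 with hu₀def
    have hu₀norm : ‖u₀‖ = 1 := by
      rw [hu₀def, norm_smul, norm_inv, norm_norm, inv_mul_cancel₀ hu0]
    have hu₀mem : u₀ ∈ Metric.closedBall (0 : O) 1 := by
      rw [Metric.mem_closedBall, dist_zero_right, hu₀norm]
    have hmem : m (K u₀) ∈ ⋃ y ∈ t, Metric.ball y δ :=
      hcover ⟨u₀, hu₀mem, rfl⟩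
    rcases Set.mem_iUnion₂.mp hmem with ⟨y, hy, hball⟩
    have hdist : ‖m (K u₀) - m (w y)‖ < 2 * δ := by
      have h1 : dist (m (K u₀)) y < δ := Metric.mem_ball.mp hball
      have h2 : dist y (m (w y)) < δ := hw2 y hy
      calc ‖m (K u₀) - m (w y)‖ = dist (m (K u₀)) (m (w y)) := (dist_eq_norm _ _).symm
        _ ≤ dist (m (K u₀)) y + dist y (m (w y)) := dist_triangle _ _ _
        _ < 2 * δ := by linarith
    have hmK : m (K (u₀ - A (w y))) = m (K u₀) - m (w y) := by
      rw [map_sub, map_sub, hKA]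
    have hsplit : E n u₀ = E n (u₀ - A (w y)) + E n (A (w y)) := by
      rw [hEadd]; abel
    have hEnu₀ : ‖E n u₀‖ ≤ ε / 2 := by
      have hb1 : ‖E n (u₀ - A (w y))‖ ≤ C * (2 * δ) := by
        refine (hEbound n _).trans ?_
        rw [hmK]
        exact mul_le_mul_of_nonneg_left hdist.le hC0
      have hb2 : ‖E n (A (w y))‖ < ε / 4 := hN n hn y hy
      have hCδ : C * (2 * δ) ≤ ε / 4 := by
        have hCp : (0:ℝ) < C + 1 := by linarith
        rw [hδdef]
        calc C * (2 * (ε / (8 * (C + 1)))) = ε / 4 * (C / (C + 1)) := by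
              field_simp; ring
          _ ≤ ε / 4 * 1 :=
              mul_le_mul_of_nonneg_left ((div_le_one hCp).2 (by linarith)) (by positivity)
          _ = ε / 4 := mul_one _
      calc ‖E n u₀‖ ≤ ‖E n (u₀ - A (w y))‖ + ‖E n (A (w y))‖ := by
            rw [hsplit]; exact norm_add_le _ _
        _ ≤ C * (2 * δ) + ε / 4 := add_le_add hb1 hb2.le
        _ ≤ ε / 4 + ε / 4 := by linarith
        _ = ε / 2 := by ring
    have hEeq : ‖E n u.1‖ / ‖u.1‖ = ‖E n u₀‖ := by
      rw [hu₀def, hEsmul, norm_smul, norm_inv, norm_norm, div_eq_inv_mul]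
    rw [hEeq]
    exact hEnu₀
  have : (⨆ u : {u : O // u ≠ 0}, ‖E n u.1‖ / ‖u.1‖) ≤ ε / 2 :=
    Real.iSup_le hkey (by positivity)
  linarith
end

section
/- With the data and hypotheses listed in the context (Z reflexive with compact embedding into O, finite-dimensional kernel G of A, gap from the discrete kernels Gₙ to G tending to 0 in Z-norm, stability of aₙ in Z-norms on the orthogonal complement of Gₙ, strengthened consistency of aₙ with convergence in Z, consistency of cₙ in Z-norms, and injectivity with dense range of A + C∘ι), there exist c′ > 0 and N such that for all n ≥ N and all u ∈ Xₙ, c′ ‖u‖_Z ≤ sup over nonzero v ∈ Xₙ of |aₙ(u, v) + cₙ(u, v)| / ‖v‖_Z; that is, the perturbed discrete forms satisfy the strengthened (Z-norm) stability inf–sup condition for n large enough. -/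
open scoped RealInnerProductSpace
open Filter

noncomputable def gapSet {E : Type*} [NormedAddCommGroup E] (S T : Set E) : ℝ :=
  ⨆ u : {u : E // u ∈ S ∧ ‖u‖ = 1}, ⨅ v : T, ‖u.1 - v.1‖

/-!
If the inf–sup constants of `aₙ + cₙ` degenerated, there would be indices `nₘ → ∞` and unit
vectors `uₘ ∈ X_{nₘ}` with `sup_v |(aₙ + cₙ)(uₘ, v)| / ‖v‖ → 0`. Split `uₘ = gₘ + (uₘ - gₘ)` with
`gₘ ∈ G_{nₘ}` and `j (uₘ - gₘ)` orthogonal to `j G_{nₘ}`. Stability of `aₙ` bounds `uₘ - gₘ`;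
the gap condition and `dim G < ∞` make `gₘ` converge, and compactness of `j` makes `j (uₘ - gₘ)`
converge, along a subsequence. By consistency, the limit `w` of `j uₘ` is orthogonal to the
dense range of `A + C ι`, so `w = 0`, and orthogonality then forces `gₘ → 0`. With `j uₘ → 0`
the stability estimate gives `uₘ - gₘ → 0`, contradicting `‖uₘ‖ = 1`.
-/

open Topology

section DualNorm

variable {Z : Type*} [NormedAddCommGroup Z] [NormedSpace ℝ Z]

noncomputable def dualNorm (X : Submodule ℝ Z) (f : X → ℝ) : ℝ :=
  ⨆ v : {v : X // v ≠ 0}, |f v| / ‖(v : Z)‖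

theorem dualNorm_nonneg {X : Submodule ℝ Z} (f : X → ℝ) : 0 ≤ dualNorm X f :=
  Real.iSup_nonneg fun _ => div_nonneg (abs_nonneg _) (norm_nonneg _)

theorem dualNorm_le {X : Submodule ℝ Z} {f : X → ℝ} {M : ℝ} (hM : 0 ≤ M)
    (h : ∀ v, |f v| ≤ M * ‖(v : Z)‖) : dualNorm X f ≤ M :=
  Real.iSup_le (fun v => div_le_of_le_mul₀ (norm_nonneg _) hM (h v)) hM

theorem dualNorm_eq_opNorm {X : Submodule ℝ Z} [FiniteDimensional ℝ X] (f : X →ₗ[ℝ] ℝ) :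
    dualNorm X f = ‖LinearMap.toContinuousLinearMap f‖ := by
  set F := LinearMap.toContinuousLinearMap f
  have hquot : ∀ v : {v : X // v ≠ 0}, |f v| / ‖(v : Z)‖ ≤ ‖F‖ := fun v =>
    div_le_of_le_mul₀ (norm_nonneg _) F.opNorm_nonneg (F.le_opNorm v)
  refine le_antisymm (Real.iSup_le hquot F.opNorm_nonneg)
    (F.opNorm_le_bound (dualNorm_nonneg _) fun v => ?_)
  rcases eq_or_ne v 0 with rfl | hv
  · simp
  · rw [← div_le_iff₀ (norm_pos_iff.2 hv)]
    exact le_ciSup ⟨‖F‖, Set.forall_mem_range.2 hquot⟩ (⟨v, hv⟩ : {v : X // v ≠ 0})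

theorem abs_le_dualNorm_mul {X : Submodule ℝ Z} [FiniteDimensional ℝ X] (f : X →ₗ[ℝ] ℝ)
    (v : X) : |f v| ≤ dualNorm X f * ‖(v : Z)‖ := by
  rw [dualNorm_eq_opNorm]
  exact (LinearMap.toContinuousLinearMap f).le_opNorm v

theorem dualNorm_smul_le {X : Submodule ℝ Z} [FiniteDimensional ℝ X] (t : ℝ) (f : X →ₗ[ℝ] ℝ) :
    dualNorm X ⇑(t • f) ≤ |t| * dualNorm X f := by
  simp only [dualNorm_eq_opNorm, map_smul]
  exact ContinuousLinearMap.opNorm_smul_le _ _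

theorem exists_seq_norm_eq_one_dualNorm_tendsto_zero {X : ℕ → Submodule ℝ Z}
    [∀ n, FiniteDimensional ℝ (X n)] (b : ∀ n, X n →ₗ[ℝ] X n →ₗ[ℝ] ℝ)
    (h : ¬∃ c : ℝ, 0 < c ∧ ∃ N : ℕ, ∀ n ≥ N, ∀ u : X n, c * ‖(u : Z)‖ ≤ dualNorm (X n) (b n u)) :
    ∃ n : ℕ → ℕ, Tendsto n atTop atTop ∧ ∃ u : ∀ m, X (n m), (∀ m, ‖(u m : Z)‖ = 1) ∧
      Tendsto (fun m => dualNorm (X (n m)) (b (n m) (u m))) atTop (𝓝 0) := by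
  push Not at h
  have hseq : ∀ m : ℕ, ∃ n ≥ m, ∃ u : X n,
      ‖(u : Z)‖ = 1 ∧ dualNorm (X n) (b n u) ≤ 1 / ((m : ℝ) + 1) := by
    intro m
    obtain ⟨n, hn, u, hu⟩ := h (1 / ((m : ℝ) + 1)) (by positivity) m
    have hu0 : 0 < ‖(u : Z)‖ :=
      pos_of_mul_pos_right ((dualNorm_nonneg _).trans_lt hu) (by positivity)
    refine ⟨n, hn, ‖(u : Z)‖⁻¹ • u, ?_, ?_⟩
    · rw [Submodule.coe_smul, norm_smul, norm_inv, norm_norm, inv_mul_cancel₀ hu0.ne']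
    · calc dualNorm (X n) (b n (‖(u : Z)‖⁻¹ • u))
          ≤ |‖(u : Z)‖⁻¹| * dualNorm (X n) (b n u) := by
            rw [map_smul]; exact dualNorm_smul_le _ _
        _ ≤ ‖(u : Z)‖⁻¹ * (1 / ((m : ℝ) + 1) * ‖(u : Z)‖) := by
            rw [abs_of_pos (inv_pos.2 hu0)]; gcongr
        _ = 1 / ((m : ℝ) + 1) := by field_simp
  choose n hn u hu1 hu using hseq
  exact ⟨n, tendsto_atTop_mono hn tendsto_id, u, hu1,
    squeeze_zero (fun m => dualNorm_nonneg _) hu tendsto_one_div_add_atTop_nhds_zero_nat⟩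

end DualNorm

theorem gapSet_nonneg {E : Type*} [NormedAddCommGroup E] (S T : Set E) : 0 ≤ gapSet S T :=
  Real.iSup_nonneg fun _ => Real.iInf_nonneg fun _ => norm_nonneg _

section Subsequences

variable {E F : Type*} [NormedAddCommGroup E] [NormedSpace ℝ E]
  [NormedAddCommGroup F] [NormedSpace ℝ F]

theorem exists_mem_norm_sub_le_gapSet_mul {S T : Submodule ℝ E} {x : E} (hx : x ∈ S) {η : ℝ}
    (hη : 0 < η) : ∃ y ∈ T, ‖x - y‖ ≤ (gapSet (S : Set E) T + η) * ‖x‖ := by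
  rcases eq_or_ne x 0 with rfl | hx0
  · exact ⟨0, T.zero_mem, by simp⟩
  have hxpos : 0 < ‖x‖ := norm_pos_iff.2 hx0
  set e : E := ‖x‖⁻¹ • x
  have he : e ∈ S ∧ ‖e‖ = 1 :=
    ⟨S.smul_mem _ hx, by rw [norm_smul, norm_inv, norm_norm, inv_mul_cancel₀ hxpos.ne']⟩
  have hinf : (⨅ v : T, ‖e - v‖) < gapSet (S : Set E) T + η := by
    refine lt_add_of_le_of_pos (le_ciSup (f := fun u : {u : E // u ∈ S ∧ ‖u‖ = 1} =>
      ⨅ v : T, ‖u.1 - v.1‖) ⟨1, ?_⟩ ⟨e, he⟩) hη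
    rintro _ ⟨u, rfl⟩
    simpa [u.2.2] using ciInf_le (f := fun v : T => ‖u.1 - (v : E)‖)
      ⟨0, Set.forall_mem_range.2 fun _ => norm_nonneg _⟩ ⟨0, T.zero_mem⟩
  obtain ⟨v, hv⟩ := exists_lt_of_ciInf_lt hinf
  refine ⟨‖x‖ • (v : E), T.smul_mem _ v.2, ?_⟩
  calc ‖x - ‖x‖ • (v : E)‖ = ‖x‖ * ‖e - v‖ := by
        rw [← norm_norm x, ← norm_smul, smul_sub, smul_inv_smul₀ hxpos.ne', norm_norm]
    _ ≤ (gapSet (S : Set E) T + η) * ‖x‖ := by rw [mul_comm]; gcongr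

theorem exists_subseq_tendsto_of_tendsto_norm_sub {T : Submodule ℝ E} [FiniteDimensional ℝ T]
    {x y : ℕ → E} {R : ℝ} (hx : ∀ m, ‖x m‖ ≤ R) (hy : ∀ m, y m ∈ T)
    (hxy : Tendsto (fun m => ‖x m - y m‖) atTop (𝓝 0)) :
    ∃ z : E, ∃ φ : ℕ → ℕ, StrictMono φ ∧ Tendsto (fun m => x (φ m)) atTop (𝓝 z) := by
  obtain ⟨D, hD⟩ := hxy.bddAbove_range
  have hyR : ∀ m, (⟨y m, hy m⟩ : T) ∈ Metric.closedBall 0 (R + D) := fun m => by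
    rw [mem_closedBall_zero_iff, Submodule.coe_norm]
    exact (norm_le_insert _ _).trans (add_le_add (hx m) (hD ⟨m, rfl⟩))
  obtain ⟨z, -, φ, hφ, hyz⟩ := (isCompact_closedBall (0 : T) (R + D)).tendsto_subseq hyR
  refine ⟨z, φ, hφ, ?_⟩
  have hxy0 : Tendsto (fun m => x (φ m) - y (φ m)) atTop (𝓝 0) :=
    tendsto_zero_iff_norm_tendsto_zero.2 (hxy.comp hφ.tendsto_atTop)
  simpa using hxy0.add ((continuous_subtype_val.tendsto z).comp hyz)

theorem exists_subseq_tendsto_of_gapSet_tendsto_zero {S : ℕ → Submodule ℝ E}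
    {T : Submodule ℝ E} [FiniteDimensional ℝ T]
    (hgap : Tendsto (fun m => gapSet (S m : Set E) T) atTop (𝓝 0))
    {x : ℕ → E} (hx : ∀ m, x m ∈ S m) {R : ℝ} (hR : ∀ m, ‖x m‖ ≤ R) :
    ∃ z : E, ∃ φ : ℕ → ℕ, StrictMono φ ∧ Tendsto (fun m => x (φ m)) atTop (𝓝 z) := by
  choose y hyT hy using fun m =>
    exists_mem_norm_sub_le_gapSet_mul (T := T) (hx m) (Nat.one_div_pos_of_nat (n := m))
  refine exists_subseq_tendsto_of_tendsto_norm_sub hR hyT (squeeze_zero (fun _ => norm_nonneg _)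
    (fun m => (hy m).trans (mul_le_mul_of_nonneg_left (hR m) ?_)) ?_)
  · exact add_nonneg (gapSet_nonneg _ _) Nat.one_div_pos_of_nat.le
  · simpa using (hgap.add tendsto_one_div_add_atTop_nhds_zero_nat).mul_const R

theorem IsCompactOperator.exists_subseq_tendsto {j : E →L[ℝ] F} (hj : IsCompactOperator j)
    {x : ℕ → E} {R : ℝ} (hx : ∀ m, ‖x m‖ ≤ R) :
    ∃ w : F, ∃ φ : ℕ → ℕ, StrictMono φ ∧ Tendsto (fun m => j (x (φ m))) atTop (𝓝 w) := by
  obtain ⟨w, -, φ, hφ, hw⟩ :=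
    (hj.isCompact_closure_image_closedBall (f := j.toLinearMap) R).tendsto_subseq
      fun m => subset_closure ⟨x m, mem_closedBall_zero_iff.2 (hx m), rfl⟩
  exact ⟨w, φ, hφ, hw⟩

theorem exists_subseq_tendsto_of_gapSet_of_isCompactOperator {j : E →L[ℝ] F}
    (hj : IsCompactOperator j) {S : ℕ → Submodule ℝ E} {T : Submodule ℝ E}
    [FiniteDimensional ℝ T] (hgap : Tendsto (fun m => gapSet (S m : Set E) T) atTop (𝓝 0))
    {x g : ℕ → E} (hg : ∀ m, g m ∈ S m) {R₁ R₂ : ℝ} (hx : ∀ m, ‖x m‖ ≤ R₁)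
    (hxg : ∀ m, ‖x m - g m‖ ≤ R₂) :
    ∃ φ : ℕ → ℕ, StrictMono φ ∧ ∃ z w, Tendsto (fun m => g (φ m)) atTop (𝓝 z) ∧
      Tendsto (fun m => j (x (φ m) - g (φ m))) atTop (𝓝 w) := by
  obtain ⟨z, φ, hφ, hz⟩ := exists_subseq_tendsto_of_gapSet_tendsto_zero hgap hg
    fun m => (norm_le_insert (x m) (g m)).trans (add_le_add (hx m) (hxg m))
  obtain ⟨w, ψ, hψ, hw⟩ := hj.exists_subseq_tendsto fun m => hxg (φ m)
  exact ⟨φ ∘ ψ, hφ.comp hψ, z, w, hz.comp hψ.tendsto_atTop, hw⟩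

end Subsequences

theorem tendsto_zero_of_abs_le_mul {x p q : ℕ → ℝ} {Q : ℝ} (hx : ∀ m, |x m| ≤ p m * q m)
    (hp : Tendsto p atTop (𝓝 0)) (hq : Tendsto q atTop (𝓝 Q)) : Tendsto x atTop (𝓝 0) :=
  squeeze_zero_norm (fun m => (Real.norm_eq_abs _).trans_le (hx m)) (by simpa using hp.mul hq)

section Inner

variable {O : Type*} [NormedAddCommGroup O] [InnerProductSpace ℝ O]

theorem exists_mem_inner_map_sub_eq_zero {V : Type*} [AddCommGroup V] [Module ℝ V]
    (j : V →ₗ[ℝ] O) (P : Submodule ℝ V) [FiniteDimensional ℝ P] (x : V) :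
    ∃ g ∈ P, ∀ g' ∈ P, ⟪j (x - g), j g'⟫ = 0 := by
  obtain ⟨g, hg, hgx⟩ := Submodule.mem_map.1 ((P.map j).orthogonalProjectionOnto (j x)).2
  refine ⟨g, hg, fun g' hg' => ?_⟩
  rw [map_sub, hgx]
  exact (P.map j).starProjection_inner_eq_zero _ _ (Submodule.mem_map_of_mem hg')

theorem eq_zero_of_inner_eq_zero_of_denseRange {Y : Type*} [TopologicalSpace Y] {f : Y → O}
    (hf : Continuous f) (hdr : DenseRange f) {D : Set Y} (hD : Dense D) {w : O}
    (h : ∀ x ∈ D, ⟪f x, w⟫ = 0) : w = 0 := by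
  have : (fun o : O => ⟪o, w⟫) = fun _ => 0 :=
    Continuous.ext_on (hdr.dense_image hf hD) (continuous_id.inner continuous_const)
      continuous_const (by rintro _ ⟨x, hx, rfl⟩; exact h x hx)
  exact inner_self_eq_zero.1 (congrFun this w)

end Inner

section Galerkin

variable {O Y Z : Type*} [NormedAddCommGroup O] [InnerProductSpace ℝ O]
  [NormedAddCommGroup Y] [NormedSpace ℝ Y] [NormedAddCommGroup Z] [NormedSpace ℝ Z]
  (j : Z →L[ℝ] O) (C : O →L[ℝ] O)

theorem abs_le_of_abs_inner_sub_le {o : O} {v : Z} {f e : ℝ} (h : |⟪o, j v⟫ - f| ≤ e) :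
    |f| ≤ ‖o‖ * ‖j‖ * ‖v‖ + e := by
  have hinner : |⟪o, j v⟫| ≤ ‖o‖ * ‖j‖ * ‖v‖ := (abs_real_inner_le_norm _ _).trans <| by
    rw [mul_assoc]; exact mul_le_mul_of_nonneg_left (j.le_opNorm v) (norm_nonneg o)
  have := abs_sub_abs_le_abs_sub f ⟪o, j v⟫
  rw [abs_sub_comm] at this
  linarith

theorem mul_norm_sub_le_of_stable {X : Submodule ℝ Z} [FiniteDimensional ℝ X]
    {a b : X →ₗ[ℝ] X →ₗ[ℝ] ℝ} {c e : ℝ}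
    (hstab : ∀ u : X, (∀ g ∈ LinearMap.ker a, ⟪j u, j g⟫ = 0) → c * ‖(u : Z)‖ ≤ dualNorm X (a u))
    (hb : ∀ u v : X, |⟪C (j u), j v⟫ - b u v| ≤ e * ‖(u : Z)‖ * ‖(v : Z)‖)
    {u g : X} (hu : ‖(u : Z)‖ ≤ 1) (hg : g ∈ LinearMap.ker a)
    (horth : ∀ g' ∈ LinearMap.ker a, ⟪j ((u : Z) - g), j g'⟫ = 0) :
    c * ‖(u : Z) - g‖ ≤ dualNorm X ((a + b) u) + (‖C (j u)‖ * ‖j‖ + |e|) := by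
  refine (hstab (u - g) horth).trans
    (dualNorm_le (add_nonneg (dualNorm_nonneg _) (by positivity)) fun v => ?_)
  have hagv : a (u - g) v = (a + b) u v - b u v := by
    simp [LinearMap.mem_ker.1 hg]
  have hbv : |⟪C (j u), j v⟫ - b u v| ≤ |e| * ‖(v : Z)‖ := (hb u v).trans <| by
    rw [mul_assoc]
    exact mul_le_mul (le_abs_self e) (mul_le_of_le_one_left (norm_nonneg _) hu)
      (by positivity) (abs_nonneg e)
  calc |a (u - g) v| ≤ |(a + b) u v| + |b u v| := by rw [hagv]; exact abs_sub _ _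
    _ ≤ dualNorm X ((a + b) u) * ‖(v : Z)‖ + (‖C (j u)‖ * ‖j‖ * ‖(v : Z)‖ + |e| * ‖(v : Z)‖) :=
        add_le_add (abs_le_dualNorm_mul _ v) (abs_le_of_abs_inner_sub_le j hbv)
    _ = _ := by ring

theorem inner_add_inner_eq_zero_of_tendsto (k : Y →L[ℝ] Z) (ι : Y →L[ℝ] O)
    (hjk : ∀ y, j (k y) = ι y) (A : Y →L[ℝ] O)
    {X : ℕ → Submodule ℝ Z} [∀ n, FiniteDimensional ℝ (X n)] {a b : ∀ n, X n →ₗ[ℝ] X n →ₗ[ℝ] ℝ}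
    (ha : ∀ n (u v : X n), a n u v = a n v u) {ε : ℕ → ℝ} (hε : Tendsto ε atTop (𝓝 0))
    (hb : ∀ n (u v : X n), |⟪C (j u), j v⟫ - b n u v| ≤ ε n * ‖(u : Z)‖ * ‖(v : Z)‖)
    {y : Y} {s : ∀ n, X n} (hs : Tendsto (fun n => ‖(s n : Z) - k y‖) atTop (𝓝 0))
    (has : Tendsto (fun n => dualNorm (X n) fun v => ⟪A y, j v⟫ - a n (s n) v) atTop (𝓝 0))
    {n : ℕ → ℕ} (hn : Tendsto n atTop atTop) {u : ∀ m, X (n m)} (hu : ∀ m, ‖(u m : Z)‖ ≤ 1)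
    (hab : Tendsto (fun m => dualNorm (X (n m)) ((a (n m) + b (n m)) (u m))) atTop (𝓝 0))
    {w : O} (hw : Tendsto (fun m => j (u m)) atTop (𝓝 w)) :
    ⟪A y, w⟫ + ⟪C w, ι y⟫ = 0 := by
  set t : ∀ m, X (n m) := fun m => s (n m)
  have ht : Tendsto (fun m => (t m : Z)) atTop (𝓝 (k y)) :=
    tendsto_iff_norm_sub_tendsto_zero.2 (hs.comp hn)
  have hconsist : Tendsto (fun m => ⟪A y, j (u m)⟫ - a (n m) (t m) (u m)) atTop (𝓝 0) := by
    refine squeeze_zero_norm (fun m => ?_) (has.comp hn)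
    exact (abs_le_dualNorm_mul ((innerSL ℝ (A y) ∘L j).toLinearMap ∘ₗ (X (n m)).subtype
      - a (n m) (t m)) (u m)).trans (mul_le_of_le_one_right (dualNorm_nonneg _) (hu m))
  have hkernel : Tendsto (fun m => (a (n m) + b (n m)) (u m) (t m)) atTop (𝓝 0) :=
    tendsto_zero_of_abs_le_mul (fun m => abs_le_dualNorm_mul _ (t m)) hab ht.norm
  have hpert : Tendsto (fun m => ⟪C (j (u m)), j (t m)⟫ - b (n m) (u m) (t m)) atTop (𝓝 0) := by
    refine tendsto_zero_of_abs_le_mul (fun m => (hb _ _ _).trans ?_)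
      (by simpa using (hε.comp hn).abs) ht.norm
    calc ε (n m) * ‖(u m : Z)‖ * ‖(t m : Z)‖ ≤ |ε (n m)| * 1 * ‖(t m : Z)‖ := by
          gcongr; exacts [le_abs_self _, hu m]
      _ = _ := by rw [mul_one]
  have hlim : Tendsto (fun m => ⟪A y, j (u m)⟫ + ⟪C (j (u m)), j (t m)⟫) atTop
      (𝓝 (⟪A y, w⟫ + ⟪C w, ι y⟫)) := by
    rw [← hjk]
    exact (tendsto_const_nhds.inner hw).add
      (((C.continuous.tendsto w).comp hw).inner ((j.continuous.tendsto _).comp ht))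
  refine tendsto_nhds_unique hlim ?_
  have hsum := (hconsist.add hkernel).add hpert
  rw [add_zero, add_zero] at hsum
  refine hsum.congr fun m => ?_
  simp only [LinearMap.add_apply, ha (n m) (t m)]
  ring

theorem eq_zero_of_tendsto_of_dualNorm_tendsto_zero (k : Y →L[ℝ] Z) (ι : Y →L[ℝ] O)
    (hjk : ∀ y, j (k y) = ι y) (A : Y →L[ℝ] O) (hCsym : ∀ x y : O, ⟪C x, y⟫ = ⟪x, C y⟫)
    (hACdr : DenseRange fun y => A y + C (ι y))
    {X : ℕ → Submodule ℝ Z} [∀ n, FiniteDimensional ℝ (X n)] {a b : ∀ n, X n →ₗ[ℝ] X n →ₗ[ℝ] ℝ}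
    (ha : ∀ n (u v : X n), a n u v = a n v u)
    {Yinf : Set Y} (hYd : Dense Yinf) (hconsist : ∀ y ∈ Yinf, ∃ s : ∀ n, X n,
      Tendsto (fun n => ‖(s n : Z) - k y‖) atTop (𝓝 0) ∧
      Tendsto (fun n => dualNorm (X n) fun v => ⟪A y, j v⟫ - a n (s n) v) atTop (𝓝 0))
    {ε : ℕ → ℝ} (hε : Tendsto ε atTop (𝓝 0))
    (hb : ∀ n (u v : X n), |⟪C (j u), j v⟫ - b n u v| ≤ ε n * ‖(u : Z)‖ * ‖(v : Z)‖)
    {n : ℕ → ℕ} (hn : Tendsto n atTop atTop) {u : ∀ m, X (n m)} (hu : ∀ m, ‖(u m : Z)‖ ≤ 1)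
    (hab : Tendsto (fun m => dualNorm (X (n m)) ((a (n m) + b (n m)) (u m))) atTop (𝓝 0))
    {w : O} (hw : Tendsto (fun m => j (u m)) atTop (𝓝 w)) : w = 0 :=
  eq_zero_of_inner_eq_zero_of_denseRange (by fun_prop) hACdr hYd fun y hy => by
    obtain ⟨s, hs, has⟩ := hconsist y hy
    rw [inner_add_left, hCsym, real_inner_comm _ (ι y)]
    exact inner_add_inner_eq_zero_of_tendsto j C k ι hjk A ha hε hb hs has hn hu hab hw

theorem exists_subseq_tendsto_of_stable (k : Y →L[ℝ] Z) (A : Y →L[ℝ] O)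
    (hjcomp : IsCompactOperator j) [FiniteDimensional ℝ (LinearMap.ker (A : Y →ₗ[ℝ] O))]
    {X : ℕ → Submodule ℝ Z} [∀ n, FiniteDimensional ℝ (X n)] {a b : ∀ n, X n →ₗ[ℝ] X n →ₗ[ℝ] ℝ}
    (hgap : Tendsto (fun n => gapSet ((LinearMap.ker (a n)).map (X n).subtype : Set Z)
      ((LinearMap.ker (A : Y →ₗ[ℝ] O)).map (k : Y →ₗ[ℝ] Z))) atTop (𝓝 0))
    {c : ℝ} (hc : 0 < c) (hstab : ∀ n (u : X n), (∀ g ∈ LinearMap.ker (a n), ⟪j u, j g⟫ = 0) →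
      c * ‖(u : Z)‖ ≤ dualNorm (X n) (a n u))
    {ε : ℕ → ℝ} (hε : Tendsto ε atTop (𝓝 0))
    (hb : ∀ n (u v : X n), |⟪C (j u), j v⟫ - b n u v| ≤ ε n * ‖(u : Z)‖ * ‖(v : Z)‖)
    {n : ℕ → ℕ} (hn : Tendsto n atTop atTop) {u g : ∀ m, X (n m)} (hu : ∀ m, ‖(u m : Z)‖ ≤ 1)
    (hab : Tendsto (fun m => dualNorm (X (n m)) ((a (n m) + b (n m)) (u m))) atTop (𝓝 0))
    (hg : ∀ m, g m ∈ LinearMap.ker (a (n m)))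
    (horth : ∀ m, ∀ g' ∈ LinearMap.ker (a (n m)), ⟪j ((u m : Z) - g m), j g'⟫ = 0) :
    ∃ φ : ℕ → ℕ, StrictMono φ ∧ ∃ z w, Tendsto (fun m => (g (φ m) : Z)) atTop (𝓝 z) ∧
      Tendsto (fun m => j ((u (φ m) : Z) - g (φ m))) atTop (𝓝 w) := by
  -- the right side of the stability estimate is dominated by a convergent sequence
  obtain ⟨R, hR⟩ := (hab.add ((tendsto_const_nhds (x := ‖C‖ * ‖j‖ * ‖j‖)).add
    (hε.comp hn).abs)).bddAbove_range
  refine exists_subseq_tendsto_of_gapSet_of_isCompactOperator hjcomp (hgap.comp hn)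
    (fun m => Submodule.mem_map_of_mem (hg m)) hu (R₂ := R / c) fun m => (le_div_iff₀' hc).2 ?_
  refine (mul_norm_sub_le_of_stable j C (hstab _) (hb _) (hu m) (hg m) (horth m)).trans
    (le_trans ?_ (hR ⟨m, rfl⟩))
  dsimp only [Function.comp]
  gcongr
  simpa using C.le_opNorm_of_le (j.le_opNorm_of_le (hu m))

theorem exists_subseq_norm_tendsto_zero (k : Y →L[ℝ] Z) (ι : Y →L[ℝ] O)
    (hjk : ∀ y, j (k y) = ι y) (A : Y →L[ℝ] O) (hjinj : Function.Injective j)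
    (hjcomp : IsCompactOperator j) (hCsym : ∀ x y : O, ⟪C x, y⟫ = ⟪x, C y⟫)
    (hACdr : DenseRange fun y => A y + C (ι y))
    [FiniteDimensional ℝ (LinearMap.ker (A : Y →ₗ[ℝ] O))]
    {X : ℕ → Submodule ℝ Z} [∀ n, FiniteDimensional ℝ (X n)] {a b : ∀ n, X n →ₗ[ℝ] X n →ₗ[ℝ] ℝ}
    (ha : ∀ n (u v : X n), a n u v = a n v u)
    (hgap : Tendsto (fun n => gapSet ((LinearMap.ker (a n)).map (X n).subtype : Set Z)
      ((LinearMap.ker (A : Y →ₗ[ℝ] O)).map (k : Y →ₗ[ℝ] Z))) atTop (𝓝 0))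
    {c : ℝ} (hc : 0 < c) (hstab : ∀ n (u : X n), (∀ g ∈ LinearMap.ker (a n), ⟪j u, j g⟫ = 0) →
      c * ‖(u : Z)‖ ≤ dualNorm (X n) (a n u))
    {Yinf : Set Y} (hYd : Dense Yinf) (hconsist : ∀ y ∈ Yinf, ∃ s : ∀ n, X n,
      Tendsto (fun n => ‖(s n : Z) - k y‖) atTop (𝓝 0) ∧
      Tendsto (fun n => dualNorm (X n) fun v => ⟪A y, j v⟫ - a n (s n) v) atTop (𝓝 0))
    {ε : ℕ → ℝ} (hε : Tendsto ε atTop (𝓝 0))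
    (hb : ∀ n (u v : X n), |⟪C (j u), j v⟫ - b n u v| ≤ ε n * ‖(u : Z)‖ * ‖(v : Z)‖)
    {n : ℕ → ℕ} (hn : Tendsto n atTop atTop) {u : ∀ m, X (n m)} (hu : ∀ m, ‖(u m : Z)‖ ≤ 1)
    (hab : Tendsto (fun m => dualNorm (X (n m)) ((a (n m) + b (n m)) (u m))) atTop (𝓝 0)) :
    ∃ φ : ℕ → ℕ, StrictMono φ ∧ Tendsto (fun m => ‖(u (φ m) : Z)‖) atTop (𝓝 0) := by
  choose g hg horth using fun m => exists_mem_inner_map_sub_eq_zero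
    (j.toLinearMap ∘ₗ (X (n m)).subtype) (LinearMap.ker (a (n m))) (u m)
  obtain ⟨φ, hφ, z, w, hgz, hw⟩ :=
    exists_subseq_tendsto_of_stable j C k A hjcomp hgap hc hstab hε hb hn hu hab hg horth
  have hnφ := hn.comp hφ.tendsto_atTop
  have hjgz : Tendsto (fun m => j (g (φ m))) atTop (𝓝 (j z)) := (j.continuous.tendsto z).comp hgz
  have hwz : w + j z = 0 := eq_zero_of_tendsto_of_dualNorm_tendsto_zero j C k ι hjk A hCsym hACdr
    ha hYd hconsist hε hb hnφ (fun m => hu (φ m)) (hab.comp hφ.tendsto_atTop)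
    (by simpa using hw.add hjgz)
  have hz : z = 0 := by
    have hwjz : ⟪w, j z⟫ = 0 := tendsto_nhds_unique (hw.inner hjgz)
      (tendsto_const_nhds.congr fun m => (horth (φ m) _ (hg (φ m))).symm)
    rw [eq_neg_of_add_eq_zero_left hwz, inner_neg_left, neg_eq_zero, inner_self_eq_zero] at hwjz
    exact hjinj (hwjz.trans j.map_zero.symm)
  have hju : Tendsto (fun m => j (u (φ m))) atTop (𝓝 0) := by simpa [hwz] using hw.add hjgz
  have hsub : Tendsto (fun m => ‖(u (φ m) : Z) - g (φ m)‖) atTop (𝓝 0) := by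
    refine squeeze_zero (fun _ => norm_nonneg _) (fun m => (le_inv_mul_iff₀ hc).2
      (mul_norm_sub_le_of_stable j C (hstab _) (hb _) (hu _) (hg _) (horth _))) ?_
    simpa using ((hab.comp hφ.tendsto_atTop).add
      ((((C.continuous.tendsto 0).comp hju).norm.mul_const ‖j‖).add (hε.comp hnφ).abs)).const_mul c⁻¹
  exact ⟨φ, hφ, squeeze_zero (fun _ => norm_nonneg _) (fun m => norm_le_norm_sub_add _ _)
    (by simpa [hz] using hsub.add hgz.norm)⟩

end Galerkin

theorem perturbed_strengthened_stability_general
    {O Y Z : Type*}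
    [NormedAddCommGroup O] [InnerProductSpace ℝ O]
    [NormedAddCommGroup Y] [NormedSpace ℝ Y]
    [NormedAddCommGroup Z] [NormedSpace ℝ Z]
    (j : Z →L[ℝ] O) (hjinj : Function.Injective j) (hjcomp : IsCompactOperator j)
    (k : Y →L[ℝ] Z) (ι : Y →L[ℝ] O) (hjk : ∀ u : Y, j (k u) = ι u)
    (A : Y →L[ℝ] O)
    (C : O →L[ℝ] O) (hCsym : ∀ x y : O, ⟪C x, y⟫ = ⟪x, C y⟫)
    (hACdr : DenseRange (fun u : Y => A u + C (ι u)))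
    (X : ℕ → Submodule ℝ Z) (hXfd : ∀ n, FiniteDimensional ℝ (X n))
    (aN cN : ∀ n, X n →ₗ[ℝ] X n →ₗ[ℝ] ℝ)
    (haNsym : ∀ n (u v : X n), aN n u v = aN n v u)
    -- `G` is the (finite-dimensional) kernel of `A`
    (hGfd : FiniteDimensional ℝ (LinearMap.ker (A : Y →ₗ[ℝ] O)))
    -- (i) the gap in `Z`-norm from `Gₙ` to `k(G)` tends to `0`
    (hgap : Tendsto (fun n =>
        gapSet ((fun g : X n => (g : Z)) '' {g : X n | ∀ v : X n, aN n g v = 0})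
          ((fun y : Y => k y) '' {y : Y | A y = 0}))
      atTop (nhds 0))
    -- (ii) `Z`-norm stability of `aₙ` on the orthogonal complement `X̃ₙ` of `Gₙ`
    (hstab : ∃ c : ℝ, 0 < c ∧ ∀ n (u : X n),
      (∀ g : X n, (∀ v : X n, aN n g v = 0) → ⟪j (u : Z), j (g : Z)⟫ = 0) →
      c * ‖(u : Z)‖ ≤ ⨆ v : {v : X n // v ≠ 0}, |aN n u v.1| / ‖(v.1 : Z)‖)
    -- (iii) strengthened consistency of `aₙ` with `a`
    (hconsist : ∃ Yinf : Submodule ℝ Y, Dense (Yinf : Set Y) ∧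
      ∀ u ∈ Yinf, ∃ useq : (n : ℕ) → X n,
        Tendsto (fun n => ‖((useq n : X n) : Z) - k u‖) atTop (nhds 0) ∧
        Tendsto (fun n => ⨆ v : {v : X n // v ≠ 0},
          |⟪A u, j (v.1 : Z)⟫ - aN n (useq n) v.1| / ‖(v.1 : Z)‖) atTop (nhds 0))
    -- (iv) `Z`-norm consistency of `cₙ` with `C`
    (hcN : ∃ ε : ℕ → ℝ, Tendsto ε atTop (nhds 0) ∧
      ∀ n (u v : X n), |⟪C (j (u : Z)), j (v : Z)⟫ - cN n u v| ≤ ε n * ‖(u : Z)‖ * ‖(v : Z)‖) :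
    ∃ c' : ℝ, 0 < c' ∧ ∃ N : ℕ, ∀ n ≥ N, ∀ u : X n,
      c' * ‖(u : Z)‖ ≤
        ⨆ v : {v : X n // v ≠ 0}, |aN n u v.1 + cN n u v.1| / ‖(v.1 : Z)‖ := by
  obtain ⟨c, hc, hstab⟩ := hstab
  obtain ⟨Yinf, hYd, hconsist⟩ := hconsist
  obtain ⟨ε, hε, hcN⟩ := hcN
  have hker : ∀ n (g : X n), g ∈ LinearMap.ker (aN n) ↔ ∀ v, aN n g v = 0 := fun _ _ =>
    LinearMap.mem_ker.trans LinearMap.ext_iff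
  have hgap' : Tendsto (fun n => gapSet ((LinearMap.ker (aN n)).map (X n).subtype : Set Z)
      ((LinearMap.ker (A : Y →ₗ[ℝ] O)).map (k : Y →ₗ[ℝ] Z))) atTop (𝓝 0) := by
    convert hgap using 3 <;> ext <;> simp [hker]
  by_contra hcon
  obtain ⟨n, hn, u, hu1, hu⟩ :=
    exists_seq_norm_eq_one_dualNorm_tendsto_zero (fun n => aN n + cN n) hcon
  obtain ⟨φ, -, hφ⟩ := exists_subseq_norm_tendsto_zero j C k ι hjk A hjinj hjcomp hCsym hACdr
    haNsym hgap' hc (fun n u hu => hstab n u fun g hg => hu g ((hker n g).2 hg)) hYd hconsist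
    hε hcN hn (fun m => (hu1 m).le) hu
  simp only [hu1] at hφ
  exact one_ne_zero (tendsto_nhds_unique tendsto_const_nhds hφ)

/-- Strengthened (Z-norm) stability of the perturbed discrete forms: with `Z` reflexive,
compactly embedded in `O`, gap of the discrete kernels to `k(G)` tending to `0` in `Z`,
`Z`-norm stability of `aₙ` on the orthogonal complement of `Gₙ`, strengthened consistency
of `aₙ` (convergence in `Z`) and `Z`-norm consistency of `cₙ`, and `A + C∘ι` injective
with dense range, the forms `aₙ + cₙ` satisfy the `Z`-norm inf–sup condition for `n`
large enough. -/
theorem perturbed_strengthened_stability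
    {O Y Z : Type*}
    [NormedAddCommGroup O] [InnerProductSpace ℝ O] [CompleteSpace O]
    [NormedAddCommGroup Y] [NormedSpace ℝ Y] [CompleteSpace Y]
    [NormedAddCommGroup Z] [NormedSpace ℝ Z] [CompleteSpace Z]
    -- `Z` is reflexive
    (hrefl : Function.Surjective (NormedSpace.inclusionInDoubleDual ℝ Z))
    (j : Z →L[ℝ] O) (hjinj : Function.Injective j) (hjcomp : IsCompactOperator j)
    (k : Y →L[ℝ] Z) (ι : Y →L[ℝ] O) (hjk : ∀ u : Y, j (k u) = ι u)
    (hιinj : Function.Injective ι) (hιd : DenseRange ι)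
    (A : Y →L[ℝ] O) (hAsym : ∀ u v : Y, ⟪A u, ι v⟫ = ⟪A v, ι u⟫)
    (C : O →L[ℝ] O) (hCsym : ∀ x y : O, ⟪C x, y⟫ = ⟪x, C y⟫)
    (hACinj : Function.Injective (fun u : Y => A u + C (ι u)))
    (hACdr : DenseRange (fun u : Y => A u + C (ι u)))
    (X : ℕ → Submodule ℝ Z) (hXfd : ∀ n, FiniteDimensional ℝ (X n))
    (aN cN : ∀ n, X n →ₗ[ℝ] X n →ₗ[ℝ] ℝ)
    (haNsym : ∀ n (u v : X n), aN n u v = aN n v u)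
    (hcNsym : ∀ n (u v : X n), cN n u v = cN n v u)
    -- `G` is the (finite-dimensional) kernel of `A`
    (hGfd : FiniteDimensional ℝ (LinearMap.ker (A : Y →ₗ[ℝ] O)))
    -- (i) the gap in `Z`-norm from `Gₙ` to `k(G)` tends to `0`
    (hgap : Tendsto (fun n =>
        gapSet ((fun g : X n => (g : Z)) '' {g : X n | ∀ v : X n, aN n g v = 0})
          ((fun y : Y => k y) '' {y : Y | A y = 0}))
      atTop (nhds 0))
    -- (ii) `Z`-norm stability of `aₙ` on the orthogonal complement `X̃ₙ` of `Gₙ`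
    (hstab : ∃ c : ℝ, 0 < c ∧ ∀ n (u : X n),
      (∀ g : X n, (∀ v : X n, aN n g v = 0) → ⟪j (u : Z), j (g : Z)⟫ = 0) →
      c * ‖(u : Z)‖ ≤ ⨆ v : {v : X n // v ≠ 0}, |aN n u v.1| / ‖(v.1 : Z)‖)
    -- (iii) strengthened consistency of `aₙ` with `a`
    (hconsist : ∃ Yinf : Submodule ℝ Y, Dense (Yinf : Set Y) ∧
      ∀ u ∈ Yinf, ∃ useq : (n : ℕ) → X n,
        Tendsto (fun n => ‖((useq n : X n) : Z) - k u‖) atTop (nhds 0) ∧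
        Tendsto (fun n => ⨆ v : {v : X n // v ≠ 0},
          |⟪A u, j (v.1 : Z)⟫ - aN n (useq n) v.1| / ‖(v.1 : Z)‖) atTop (nhds 0))
    -- (iv) `Z`-norm consistency of `cₙ` with `C`
    (hcN : ∃ ε : ℕ → ℝ, Tendsto ε atTop (nhds 0) ∧
      ∀ n (u v : X n), |⟪C (j (u : Z)), j (v : Z)⟫ - cN n u v| ≤ ε n * ‖(u : Z)‖ * ‖(v : Z)‖) :
    ∃ c' : ℝ, 0 < c' ∧ ∃ N : ℕ, ∀ n ≥ N, ∀ u : X n,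
      c' * ‖(u : Z)‖ ≤
        ⨆ v : {v : X n // v ≠ 0}, |aN n u v.1 + cN n u v.1| / ‖(v.1 : Z)‖ :=
  perturbed_strengthened_stability_general j hjinj hjcomp k ι hjk A C hCsym hACdr X hXfd aN cN
    haNsym hGfd hgap hstab hconsist hcN
end

section
/- Let O be a real inner product space, X_h ⊆ O a finite-dimensional subspace, and d : X_h → X_h a linear map with d ∘ d = 0. Then the form a satisfies the following inf–sup estimate with constant 1 relative to the discrete domain seminorm: for every u ∈ X̃_h there exists v ∈ X̃_h with [v]_h ≤ 1 and |a(u, v)| ≥ ‖u‖. -/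
open scoped RealInnerProductSpace

/-! With `D = d + d*`, `d ∘ d = 0` makes `d x` orthogonal to `d* x`, so
`‖D v‖² = ‖d v‖² + ‖d* v‖²`. Hence `ker D` is the discrete cohomology `G_h`, and `[v]_h ≤ ‖D v‖`
since the supremum in `[v]_h` is at most `‖d* v‖`. Moreover `a(u, v) = ⟪u, D v⟫`. As `D` is
symmetric, its range is `(ker D)ᗮ = X̃_h`, so `u = D v` for some `v ∈ X̃_h`, and `‖u‖⁻¹ • v` is the
required test function. -/

open LinearMap Submodule

theorem LinearMap.IsSymmetric.exists_mem_orthogonal_ker_apply_eq {𝕜 E : Type*} [RCLike 𝕜]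
    [NormedAddCommGroup E] [InnerProductSpace 𝕜 E] [FiniteDimensional 𝕜 E] {T : E →ₗ[𝕜] E}
    (hT : T.IsSymmetric) {u : E} (hu : u ∈ (ker T)ᗮ) : ∃ v ∈ (ker T)ᗮ, T v = u := by
  rw [← hT.orthogonal_range, orthogonal_orthogonal] at hu
  obtain ⟨v, rfl⟩ := hu
  obtain ⟨y, hy, z, hz, rfl⟩ := (ker T).exists_add_mem_mem_orthogonal v
  exact ⟨z, hz, by rw [map_add, mem_ker.mp hy, zero_add]⟩

section HodgeDirac

variable {E F : Type*} [NormedAddCommGroup E] [InnerProductSpace ℝ E] [FiniteDimensional ℝ E]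
  [NormedAddCommGroup F] [InnerProductSpace ℝ F] [FiniteDimensional ℝ F]

theorem LinearMap.adjoint_apply_eq_zero_iff (T : E →ₗ[ℝ] F) (y : F) :
    adjoint T y = 0 ↔ ∀ x, ⟪y, T x⟫ = 0 := by
  refine ⟨fun h x => by rw [← adjoint_inner_left, h, inner_zero_left], fun h => ?_⟩
  rw [← inner_self_eq_zero (𝕜 := ℝ), adjoint_inner_left, h]

theorem LinearMap.iSup_abs_inner_apply_div_norm_le (T : E →ₗ[ℝ] F) (y : F) :
    ⨆ x : {x : E // x ≠ 0}, |⟪y, T x⟫| / ‖x.1‖ ≤ ‖adjoint T y‖ :=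
  Real.iSup_le (fun x => div_le_of_le_mul₀ (norm_nonneg _) (norm_nonneg _) <| by
    rw [← adjoint_inner_left]; exact abs_real_inner_le_norm _ _) (norm_nonneg _)

variable (d : E →ₗ[ℝ] E)

noncomputable def hodgeDirac : E →ₗ[ℝ] E := d + adjoint d

noncomputable def domainSeminorm (v : E) : ℝ :=
  √(‖d v‖ ^ 2 + (⨆ w : {w : E // w ≠ 0}, |⟪v, d w⟫| / ‖w.1‖) ^ 2)

theorem hodgeDirac_apply (x : E) : hodgeDirac d x = d x + adjoint d x := rfl

theorem isSymmetric_hodgeDirac : (hodgeDirac d).IsSymmetric := by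
  rw [isSymmetric_iff_isSelfAdjoint, hodgeDirac, ← star_eq_adjoint]
  exact IsSelfAdjoint.add_star_self d

theorem inner_apply_add_inner_apply_eq_inner_hodgeDirac (u v : E) :
    ⟪d u, v⟫ + ⟪u, d v⟫ = ⟪u, hodgeDirac d v⟫ := by
  rw [hodgeDirac_apply, inner_add_right, adjoint_inner_right, add_comm]

variable {d}

theorem inner_apply_adjoint_eq_zero (hd : ∀ x, d (d x) = 0) (x y : E) :
    ⟪d x, adjoint d y⟫ = 0 := by
  rw [adjoint_inner_right, hd, inner_zero_left]

theorem norm_hodgeDirac_sq (hd : ∀ x, d (d x) = 0) (x : E) :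
    ‖hodgeDirac d x‖ ^ 2 = ‖d x‖ ^ 2 + ‖adjoint d x‖ ^ 2 := by
  rw [hodgeDirac_apply, norm_add_sq_real, inner_apply_adjoint_eq_zero hd, mul_zero, add_zero]

theorem mem_ker_hodgeDirac_iff (hd : ∀ x, d (d x) = 0) {g : E} :
    g ∈ ker (hodgeDirac d) ↔ d g = 0 ∧ ∀ w, ⟪g, d w⟫ = 0 := by
  rw [mem_ker, ← adjoint_apply_eq_zero_iff, ← norm_eq_zero, ← sq_eq_zero_iff,
    norm_hodgeDirac_sq hd, add_eq_zero_iff_of_nonneg (sq_nonneg _) (sq_nonneg _)]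
  simp only [sq_eq_zero_iff, norm_eq_zero]

theorem domainSeminorm_le_norm_hodgeDirac (hd : ∀ x, d (d x) = 0) (v : E) :
    domainSeminorm d v ≤ ‖hodgeDirac d v‖ := by
  rw [domainSeminorm, ← Real.sqrt_sq (norm_nonneg (hodgeDirac d v)), norm_hodgeDirac_sq hd]
  have hsup := Real.iSup_nonneg fun w : {w : E // w ≠ 0} =>
    div_nonneg (abs_nonneg ⟪v, d w.1⟫) (norm_nonneg w.1)
  gcongr
  exact d.iSup_abs_inner_apply_div_norm_le v

end HodgeDirac

/-- Discrete inf–sup estimate with constant 1 for the Hodge–Dirac form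
`a(u,v) = ⟨du, v⟩ + ⟨u, dv⟩` relative to the discrete domain seminorm
`[v]_h² = ‖dv‖² + (sup_{w ≠ 0} |⟨v, dw⟩|/‖w‖)²`: for every `u` in the orthogonal
complement `X̃_h` of the discrete cohomology `G_h`, there is `v ∈ X̃_h` with `[v]_h ≤ 1`
and `|a(u,v)| ≥ ‖u‖`. -/
theorem discrete_infSup_hodgeDirac
    {O : Type*} [NormedAddCommGroup O] [InnerProductSpace ℝ O]
    (Xh : Submodule ℝ O) [FiniteDimensional ℝ Xh]
    (d : Xh →ₗ[ℝ] Xh) (hd : ∀ x : Xh, d (d x) = 0)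
    (u : Xh)
    (hu : ∀ g : Xh, (d g = 0 ∧ ∀ v : Xh, ⟪(g : O), (d v : O)⟫ = 0) →
      ⟪(u : O), (g : O)⟫ = 0) :
    ∃ v : Xh,
      (∀ g : Xh, (d g = 0 ∧ ∀ w : Xh, ⟪(g : O), (d w : O)⟫ = 0) →
        ⟪(v : O), (g : O)⟫ = 0) ∧
      Real.sqrt (‖(d v : O)‖ ^ 2 +
        (⨆ w : {w : Xh // w ≠ 0}, |⟪(v : O), (d w.1 : O)⟫| / ‖(w.1 : O)‖) ^ 2) ≤ 1 ∧
      ‖(u : O)‖ ≤ |⟪(d u : O), (v : O)⟫ + ⟪(u : O), (d v : O)⟫| := by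
  simp only [← Submodule.coe_inner, Submodule.norm_coe, ← mem_ker_hodgeDirac_iff hd,
    ← Submodule.mem_orthogonal'] at hu ⊢
  obtain ⟨v, hv, hDv⟩ := (isSymmetric_hodgeDirac d).exists_mem_orthogonal_ker_apply_eq hu
  -- for `u = 0` the witness is `0⁻¹ • v = 0`
  refine ⟨‖u‖⁻¹ • v, smul_mem _ _ hv, ?_, ?_⟩
  · calc domainSeminorm d (‖u‖⁻¹ • v) ≤ ‖hodgeDirac d (‖u‖⁻¹ • v)‖ :=
          domainSeminorm_le_norm_hodgeDirac hd _
      _ = ‖u‖⁻¹ * ‖u‖ := by rw [map_smul, hDv, norm_smul, norm_inv, norm_norm]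
      _ ≤ 1 := inv_mul_le_one_of_le₀ le_rfl (norm_nonneg _)
  · rw [inner_apply_add_inner_apply_eq_inner_hodgeDirac, map_smul, hDv, real_inner_smul_right,
      real_inner_self_eq_norm_sq, sq, ← mul_assoc, inv_mul_mul_self, abs_norm]
end
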